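/- For all n ≥ 1, 𝒪_n(z) = Σ_{j ≥ 0} binom(n−j, j)·2^j·z^{2j} − Σ_{j ≥ 0} binom(n−2−j, j)·2^j·z^{2j+2}. -/
import Mathlib


open Polynomial

/-- The `n × n` symmetric tridiagonal matrix over GF(2) with diagonal `X` and
super/subdiagonal entries `Y`. -/
def triMat (n : ℕ) (X : Fin n → ZMod 2) (Y : Fin (n - 1) → ZMod 2) :
    Matrix (Fin n) (Fin n) (ZMod 2) :=
  Matrix.of fun i j =>
    (if i = j then X i else 0) +
      ∑ k : Fin (n - 1),
        if ((i : ℕ) = k ∧ (j : ℕ) = k + 1) ∨ ((j : ℕ) = k ∧ (i : ℕ) = k + 1) then Y k else 0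

/-- The rank-distribution polynomial `𝒪_n(z) = ∑_{Y ∈ GF(2)^{n-1}} z^{rank(M_n^{0,Y})}`. -/
noncomputable def OPoly (n : ℕ) : Polynomial ℤ :=
  ∑ Y : Fin (n - 1) → ZMod 2, (X : Polynomial ℤ) ^ (triMat n 0 Y).rank

/-- Binomial coefficient with the convention that it vanishes on out-of-range
(in particular negative) arguments. -/
def ich (a b : ℤ) : ℤ := if 0 ≤ b ∧ b ≤ a then a.toNat.choose b.toNat else 0


/-- The submodule `p.prod q` is linearly equivalent to `p × q`. -/
def prodSubEquiv {R M N : Type*} [Ring R] [AddCommGroup M] [AddCommGroup N]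
    [Module R M] [Module R N] (p : Submodule R M) (q : Submodule R N) :
    (p.prod q) ≃ₗ[R] p × q where
  toFun x := (⟨x.1.1, x.2.1⟩, ⟨x.1.2, x.2.2⟩)
  invFun y := ⟨(y.1.1, y.2.1), ⟨y.1.2, y.2.2⟩⟩
  map_add' _ _ := rfl
  map_smul' _ _ := rfl
  left_inv _ := rfl
  right_inv _ := rfl

lemma range_prodMap {R M N M' N' : Type*} [Ring R] [AddCommGroup M] [AddCommGroup N]
    [AddCommGroup M'] [AddCommGroup N'] [Module R M] [Module R N] [Module R M'] [Module R N']
    (f : M →ₗ[R] M') (g : N →ₗ[R] N') :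
    LinearMap.range (f.prodMap g) = (LinearMap.range f).prod (LinearMap.range g) := by
  ext x
  simp only [LinearMap.mem_range, Submodule.mem_prod, LinearMap.prodMap_apply]
  constructor
  · rintro ⟨y, hy⟩
    exact ⟨⟨y.1, by rw [← hy]⟩, ⟨y.2, by rw [← hy]⟩⟩
  · rintro ⟨⟨a, ha⟩, ⟨b, hb⟩⟩
    exact ⟨(a, b), by simp [ha, hb]⟩

lemma rank_fromBlocks_diag {K : Type*} [Field K] {m n : Type*} [Fintype m] [Fintype n]
    [DecidableEq m] [DecidableEq n] (A : Matrix m m K) (D : Matrix n n K) :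
    (Matrix.fromBlocks A 0 0 D).rank = A.rank + D.rank := by
  classical
  set e := LinearEquiv.sumArrowLequivProdArrow m n K K with he
  have hM : (Matrix.fromBlocks A 0 0 D).mulVecLin
      = e.symm.toLinearMap ∘ₗ ((A.mulVecLin).prodMap (D.mulVecLin)) ∘ₗ e.toLinearMap := by
    apply LinearMap.ext; intro v
    funext i
    cases i with
    | inl i =>
      simp [he, Matrix.fromBlocks_mulVec, LinearEquiv.sumArrowLequivProdArrow, Equiv.sumArrowEquivProdArrow, Function.comp]
    | inr i =>
      simp [he, Matrix.fromBlocks_mulVec, LinearEquiv.sumArrowLequivProdArrow, Equiv.sumArrowEquivProdArrow, Function.comp]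
  rw [Matrix.rank, hM, LinearMap.range_comp, LinearMap.range_comp_of_range_eq_top _ e.range,
    LinearEquiv.finrank_map_eq, range_prodMap,
    (prodSubEquiv _ _).finrank_eq, Module.finrank_prod]
  rfl

lemma triMat_apply (n : ℕ) (Y : Fin (n - 1) → ZMod 2) (i j : Fin n) :
    triMat n 0 Y i j =
      (if h : (i : ℕ) + 1 = j then Y ⟨i, by omega⟩
       else if h' : (j : ℕ) + 1 = i then Y ⟨j, by omega⟩ else 0) := by
  have hj := j.isLt
  have hi := i.isLt
  unfold triMat
  simp only [Matrix.of_apply, Pi.zero_apply, ite_self, zero_add]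
  split_ifs with h h'
  · rw [Finset.sum_eq_single (⟨(i : ℕ), by omega⟩ : Fin (n - 1))]
    · rw [if_pos]
      exact Or.inl ⟨rfl, by simpa using h.symm⟩
    · intro k _ hk
      rw [if_neg]
      rintro (⟨h1, h2⟩ | ⟨h1, h2⟩)
      · exact hk (by apply Fin.ext; simpa using h1.symm)
      · omega
    · intro hmem
      exact absurd (Finset.mem_univ _) hmem
  · rw [Finset.sum_eq_single (⟨(j : ℕ), by omega⟩ : Fin (n - 1))]
    · rw [if_pos]
      exact Or.inr ⟨rfl, by simpa using h'.symm⟩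
    · intro k _ hk
      rw [if_neg]
      rintro (⟨h1, h2⟩ | ⟨h1, h2⟩)
      · omega
      · exact hk (by apply Fin.ext; simpa using h1.symm)
    · intro hmem
      exact absurd (Finset.mem_univ _) hmem
  · apply Finset.sum_eq_zero
    intro k _
    rw [if_neg]
    rintro (⟨h1, h2⟩ | ⟨h1, h2⟩) <;> omega

lemma cons_mk {n : ℕ} (y : ZMod 2) (t : Fin n → ZMod 2) (k : ℕ) (h : k < n + 1) :
    (Fin.cons y t : Fin (n + 1) → ZMod 2) ⟨k, h⟩
      = if hk : 0 < k then t ⟨k - 1, by omega⟩ else y := by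
  cases k with
  | zero => simp
  | succ k =>
    rw [dif_pos (Nat.succ_pos k)]
    have h2 : (⟨k + 1, h⟩ : Fin (n + 1)) = Fin.succ ⟨k, by omega⟩ := rfl
    rw [h2, Fin.cons_succ]
    exact congrArg t (Fin.ext (by simp))

lemma rank_cons_zero (m : ℕ) (Yt : Fin m → ZMod 2) :
    (triMat (m + 2) 0 (Fin.cons 0 Yt)).rank = (triMat (m + 1) 0 Yt).rank := by
  let e : Fin 1 ⊕ Fin (m + 1) ≃ Fin (m + 2) := finSumFinEquiv.trans (finCongr (by omega))
  have h1 : ∀ a : Fin 1, ((e (Sum.inl a) : ℕ)) = (a : ℕ) := by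
    intro a; simp [e, finSumFinEquiv]
  have h2 : ∀ b : Fin (m + 1), ((e (Sum.inr b) : ℕ)) = 1 + b := by
    intro b; simp [e, finSumFinEquiv]; omega
  have key : (triMat (m + 2) 0 (Fin.cons 0 Yt)).submatrix e e
      = Matrix.fromBlocks (0 : Matrix (Fin 1) (Fin 1) (ZMod 2)) 0 0 (triMat (m + 1) 0 Yt) := by
    ext i j
    cases i with
    | inl a =>
      cases j with
      | inl b =>
        have ha := a.isLt
        have hb := b.isLt
        simp only [Matrix.submatrix_apply, triMat_apply, h1, h2,
          Matrix.fromBlocks_apply₁₁, Matrix.zero_apply]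
        split_ifs with hc hc' <;> first | omega | rfl
      | inr b =>
        have ha := a.isLt
        have hb := b.isLt
        simp only [Matrix.submatrix_apply, triMat_apply, h1, h2,
          Matrix.fromBlocks_apply₁₂, Matrix.zero_apply]
        split_ifs with hc hc'
        · rw [cons_mk, dif_neg (by omega)]
        · omega
        · rfl
    | inr a =>
      cases j with
      | inl b =>
        have ha := a.isLt
        have hb := b.isLt
        simp only [Matrix.submatrix_apply, triMat_apply, h1, h2,
          Matrix.fromBlocks_apply₂₁, Matrix.zero_apply]
        split_ifs with hc hc'
        · omega
        · rw [cons_mk, dif_neg (by omega)]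
        · rfl
      | inr b =>
        have ha := a.isLt
        have hb := b.isLt
        simp only [Matrix.submatrix_apply, triMat_apply, h1, h2,
          Matrix.fromBlocks_apply₂₂, Matrix.zero_apply]
        split_ifs with hc hc' hd hd' <;> try omega
        · rw [cons_mk, dif_pos (by omega)]
          congr 1
          exact Fin.ext (by simp)
        · rw [cons_mk, dif_pos (by omega)]
          congr 1
          exact Fin.ext (by simp)
        · rfl
  have hsub := Matrix.rank_submatrix (triMat (m + 2) 0 (Fin.cons 0 Yt)) e e
  rw [← hsub, key, rank_fromBlocks_diag, Matrix.rank_zero, zero_add]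

lemma rank_cons_one (m : ℕ) (Yt : Fin m → ZMod 2) :
    (triMat (m + 2) 0 (Fin.cons 1 Yt)).rank
      = 2 + (triMat m 0 (fun k : Fin (m - 1) =>
          Yt ⟨(k : ℕ) + 1, by have := k.isLt; omega⟩)).rank := by
  let e : Fin 2 ⊕ Fin m ≃ Fin (m + 2) := finSumFinEquiv.trans (finCongr (by omega))
  have h1 : ∀ a : Fin 2, ((e (Sum.inl a) : ℕ)) = (a : ℕ) := by
    intro a; simp [e, finSumFinEquiv]
  have h2 : ∀ b : Fin m, ((e (Sum.inr b) : ℕ)) = 2 + b := by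
    intro b; simp [e, finSumFinEquiv]; omega
  set A : Matrix (Fin 2) (Fin 2) (ZMod 2) := !![0, 1; 1, 0] with hA
  set B : Matrix (Fin 2) (Fin m) (ZMod 2) := Matrix.of fun i j =>
    if (i : ℕ) = 1 ∧ (j : ℕ) = 0 then Yt ⟨0, by have := j.isLt; omega⟩ else 0 with hB
  set C : Matrix (Fin m) (Fin 2) (ZMod 2) := Matrix.of fun i j =>
    if (j : ℕ) = 1 ∧ (i : ℕ) = 0 then Yt ⟨0, by have := i.isLt; omega⟩ else 0 with hC
  set D : Matrix (Fin m) (Fin m) (ZMod 2) := triMat m 0 (fun k : Fin (m - 1) =>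
    Yt ⟨(k : ℕ) + 1, by have := k.isLt; omega⟩) with hD
  have key : (triMat (m + 2) 0 (Fin.cons 1 Yt)).submatrix e e
      = Matrix.fromBlocks A B C D := by
    ext i j
    cases i with
    | inl a =>
      cases j with
      | inl b =>
        have ha := a.isLt
        have hb := b.isLt
        simp only [Matrix.submatrix_apply, triMat_apply, h1, h2, Matrix.fromBlocks_apply₁₁]
        fin_cases a <;> fin_cases b <;> simp [cons_mk, hA]
      | inr b =>
        have ha := a.isLt
        have hb := b.isLt
        simp only [Matrix.submatrix_apply, triMat_apply, h1, h2, Matrix.fromBlocks_apply₁₂]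
        split_ifs with hc hc'
        · rw [cons_mk, dif_pos (by omega)]
          rw [hB]
          simp only [Matrix.of_apply]
          rw [if_pos ⟨by omega, by omega⟩]
          exact congrArg Yt (Fin.ext (by simp; omega))
        · omega
        · rw [hB]
          simp only [Matrix.of_apply]
          rw [if_neg (by omega)]
    | inr a =>
      cases j with
      | inl b =>
        have ha := a.isLt
        have hb := b.isLt
        simp only [Matrix.submatrix_apply, triMat_apply, h1, h2, Matrix.fromBlocks_apply₂₁]
        split_ifs with hc hc'
        · omega
        · rw [cons_mk, dif_pos (by omega)]
          rw [hC]
          simp only [Matrix.of_apply]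
          rw [if_pos ⟨by omega, by omega⟩]
          exact congrArg Yt (Fin.ext (by simp; omega))
        · rw [hC]
          simp only [Matrix.of_apply]
          rw [if_neg (by omega)]
      | inr b =>
        have ha := a.isLt
        have hb := b.isLt
        simp only [Matrix.submatrix_apply, triMat_apply, h1, h2, Matrix.fromBlocks_apply₂₂, hD]
        split_ifs with hc hc' hd hd' <;> try omega
        · rw [cons_mk, dif_pos (by omega)]
          exact congrArg Yt (Fin.ext (by simp; omega))
        · rw [cons_mk, dif_pos (by omega)]
          exact congrArg Yt (Fin.ext (by simp; omega))
        · rfl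
  have hAA : A * A = 1 := by decide
  haveI : Invertible A := ⟨A, hAA, hAA⟩
  have hCAB : C * ⅟A * B = 0 := by
    rw [invOf_eq_right_inv hAA]
    ext i j
    simp [Matrix.mul_apply, Fin.sum_univ_two, hA, hB, hC]
  have hschur := Matrix.fromBlocks_eq_of_invertible₁₁ A B C D
  have hdetL : IsUnit (Matrix.fromBlocks (1 : Matrix (Fin 2) (Fin 2) (ZMod 2)) 0 (C * ⅟A)
      (1 : Matrix (Fin m) (Fin m) (ZMod 2))).det := by
    rw [Matrix.det_fromBlocks_zero₁₂]
    simp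
  have hdetR : IsUnit (Matrix.fromBlocks (1 : Matrix (Fin 2) (Fin 2) (ZMod 2)) (⅟A * B) 0
      (1 : Matrix (Fin m) (Fin m) (ZMod 2))).det := by
    rw [Matrix.det_fromBlocks_zero₂₁]
    simp
  have hsub := Matrix.rank_submatrix (triMat (m + 2) 0 (Fin.cons 1 Yt)) e e
  rw [← hsub, key, hschur, Matrix.rank_mul_eq_left_of_isUnit_det _ _ hdetR,
    Matrix.rank_mul_eq_right_of_isUnit_det _ _ hdetL, hCAB, sub_zero, rank_fromBlocks_diag]
  congr 1
  rw [Matrix.rank_of_isUnit A (isUnit_of_invertible A)]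
  rfl

open Polynomial

lemma zmod2_sum {M : Type*} [AddCommMonoid M] (g : ZMod 2 → M) :
    ∑ y : ZMod 2, g y = g 0 + g 1 :=
  Fin.sum_univ_two g

lemma triMat_one_eq_zero (Y : Fin 0 → ZMod 2) : triMat 1 0 Y = 0 := by
  ext i j
  rw [triMat_apply]
  have hi := i.isLt
  have hj := j.isLt
  split_ifs with h h' <;> first | omega | rfl

lemma triMat_zero_eq_zero (Y : Fin 0 → ZMod 2) : triMat 0 0 Y = 0 := by
  ext i j
  exact i.elim0

lemma OPoly_one : OPoly 1 = 1 := by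
  unfold OPoly
  rw [Finset.sum_congr rfl (fun Y _ => by rw [triMat_one_eq_zero Y, Matrix.rank_zero, pow_zero])]
  simp

lemma pi_sum_split {m : ℕ} {M : Type*} [AddCommMonoid M] (F : (Fin (m + 1) → ZMod 2) → M) :
    (∑ Y : Fin (m + 1) → ZMod 2, F Y)
      = (∑ t : Fin m → ZMod 2, F (Fin.cons 0 t)) + ∑ t : Fin m → ZMod 2, F (Fin.cons 1 t) := by
  have h1 : (∑ Y : Fin (m + 1) → ZMod 2, F Y)
      = ∑ p : ZMod 2 × (Fin m → ZMod 2), F (Fin.cons p.1 p.2) :=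
    (Fintype.sum_equiv (Fin.consEquiv (fun _ : Fin (m + 1) => ZMod 2))
      (fun p : ZMod 2 × (Fin m → ZMod 2) => F (Fin.cons p.1 p.2)) F (fun p => rfl)).symm
  rw [h1, Fintype.sum_prod_type, zmod2_sum]

lemma OPoly_split (m : ℕ) :
    OPoly (m + 2) = (∑ t : Fin m → ZMod 2, (X : Polynomial ℤ) ^ (triMat (m + 2) 0 (Fin.cons 0 t)).rank)
      + ∑ t : Fin m → ZMod 2, (X : Polynomial ℤ) ^ (triMat (m + 2) 0 (Fin.cons 1 t)).rank := by
  unfold OPoly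
  exact pi_sum_split _

lemma sum_shift {m : ℕ} {M : Type*} [AddCommMonoid M] (F : (Fin m → ZMod 2) → M) :
    (∑ t : Fin (m + 1) → ZMod 2,
        F (fun k => t ⟨(k : ℕ) + 1, by have := k.isLt; omega⟩))
      = (∑ s : Fin m → ZMod 2, F s) + ∑ s : Fin m → ZMod 2, F s := by
  rw [pi_sum_split (fun t : Fin (m + 1) → ZMod 2 =>
    F (fun k => t ⟨(k : ℕ) + 1, by have := k.isLt; omega⟩))]
  have hc : ∀ (y : ZMod 2) (s : Fin m → ZMod 2),
      (fun k : Fin m => (Fin.cons y s : Fin (m + 1) → ZMod 2)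
        ⟨(k : ℕ) + 1, by have := k.isLt; omega⟩) = s := by
    intro y s
    funext k
    have h2 : (⟨(k : ℕ) + 1, by have := k.isLt; omega⟩ : Fin (m + 1)) = Fin.succ k := rfl
    rw [h2, Fin.cons_succ]
  congr 1
  all_goals exact Finset.sum_congr rfl fun s _ => congrArg F (hc _ s)

lemma OPoly_rec (m : ℕ) :
    OPoly (m + 3) = OPoly (m + 2) + Polynomial.C 2 * X ^ 2 * OPoly (m + 1) := by
  rw [OPoly_split (m + 1)]
  congr 1
  · unfold OPoly
    exact Finset.sum_congr rfl fun t _ => by rw [rank_cons_zero (m + 1) t]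
  · rw [Finset.sum_congr rfl (fun (t : Fin (m + 1) → ZMod 2) (_ : t ∈ Finset.univ) => by
      rw [rank_cons_one (m + 1) t, pow_add])]
    rw [← Finset.mul_sum]
    have hshow : (∑ t : Fin (m + 1) → ZMod 2,
        (X : Polynomial ℤ) ^ (triMat (m + 1) 0 (fun k : Fin ((m + 1) - 1) =>
          t ⟨(k : ℕ) + 1, by have := k.isLt; omega⟩)).rank)
        = (∑ s : Fin m → ZMod 2, (X : Polynomial ℤ) ^ (triMat (m + 1) 0 s).rank)
          + ∑ s : Fin m → ZMod 2, (X : Polynomial ℤ) ^ (triMat (m + 1) 0 s).rank :=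
      sum_shift (fun s : Fin m → ZMod 2 => (X : Polynomial ℤ) ^ (triMat (m + 1) 0 s).rank)
    rw [hshow]
    have hO : OPoly (m + 1) = ∑ s : Fin m → ZMod 2, (X : Polynomial ℤ) ^ (triMat (m + 1) 0 s).rank := rfl
    have hC : (Polynomial.C 2 : Polynomial ℤ) = 2 := by norm_num
    rw [hO, hC]
    ring

lemma OPoly_two : OPoly 2 = 1 + X ^ 2 := by
  have h := OPoly_split 0
  norm_num at h
  rw [h]
  have h0 : ∀ t : Fin 0 → ZMod 2, (triMat 2 0 (Fin.cons 0 t)).rank = 0 := by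
    intro t
    rw [rank_cons_zero 0 t, triMat_one_eq_zero, Matrix.rank_zero]
  have h1 : ∀ t : Fin 0 → ZMod 2, (triMat 2 0 (Fin.cons 1 t)).rank = 2 := by
    intro t
    rw [rank_cons_one 0 t, triMat_zero_eq_zero, Matrix.rank_zero]
  simp only [h0, h1]
  simp

open Polynomial

noncomputable def S (a : ℤ) (E N : ℕ) : Polynomial ℤ :=
  ∑ j ∈ Finset.range N, Polynomial.C (ich (a - j) j * 2 ^ j) * X ^ (2 * j + E)

lemma ich_pascal (a b : ℤ) (hb : 0 ≤ b) (h : ¬(a = 0 ∧ b = 0)) :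
    ich a b = ich (a - 1) b + ich (a - 1) (b - 1) := by
  unfold ich
  rcases lt_or_ge a b with hab | hab
  · rw [if_neg (by omega), if_neg (by omega), if_neg (by omega)]
    norm_num
  · rcases eq_or_lt_of_le hab with heq | hlt
    · -- b = a, and a ≠ 0 so a ≥ 1
      have ha1 : 1 ≤ a := by omega
      rw [if_pos ⟨hb, hab⟩, if_neg (by omega), if_pos ⟨by omega, by omega⟩]
      have e1 : a.toNat.choose b.toNat = 1 := by
        rw [show a.toNat = b.toNat by omega]
        exact Nat.choose_self _
      have e2 : (a - 1).toNat.choose (b - 1).toNat = 1 := by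
        rw [show (a - 1).toNat = (b - 1).toNat by omega]
        exact Nat.choose_self _
      rw [e1, e2]
      norm_num
    · rcases eq_or_lt_of_le hb with hb0 | hb1
      · -- b = 0, a ≥ 1
        rw [if_pos ⟨hb, hab⟩, if_pos ⟨hb, by omega⟩, if_neg (by omega)]
        rw [show b.toNat = 0 by omega]
        simp [Nat.choose_zero_right]
      · -- 1 ≤ b < a
        rw [if_pos ⟨hb, hab⟩, if_pos ⟨hb, by omega⟩, if_pos ⟨by omega, by omega⟩]
        have ha' : a.toNat = (a - 1).toNat + 1 := by omega
        have hb' : b.toNat = (b - 1).toNat + 1 := by omega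
        rw [ha', hb', Nat.choose_succ_succ]
        push_cast
        ring

lemma S_mono (a : ℤ) (E : ℕ) {N M : ℕ} (h : N ≤ M) (ha : a < 2 * N) :
    S a E M = S a E N := by
  unfold S
  rw [← Finset.sum_subset (Finset.range_subset_range.mpr h)]
  intro j hj hjN
  simp only [Finset.mem_range, not_lt] at hj hjN
  have : ich (a - j) j = 0 := by
    rw [ich, if_neg (by omega)]
  rw [this]
  simp

lemma S_rec (a : ℤ) (ha : a ≠ 0) (E N : ℕ) :
    S a E (N + 1) = S (a - 1) E (N + 1) + Polynomial.C 2 * X ^ 2 * S (a - 2) E N := by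
  unfold S
  have hterm : ∀ j : ℕ, Polynomial.C (ich (a - j) j * 2 ^ j) * X ^ (2 * j + E)
      = Polynomial.C (ich (a - 1 - j) j * 2 ^ j) * X ^ (2 * j + E)
        + Polynomial.C (ich (a - 1 - j) ((j : ℤ) - 1) * 2 ^ j) * X ^ (2 * j + E) := by
    intro j
    have hp := ich_pascal (a - j) j (by positivity) (by omega)
    rw [show a - (j : ℤ) - 1 = a - 1 - j by ring] at hp
    rw [hp, add_mul, map_add, add_mul]
  rw [Finset.sum_congr rfl fun j _ => hterm j, Finset.sum_add_distrib]
  congr 1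
  rw [Finset.sum_range_succ']
  have h0 : Polynomial.C (ich (a - 1 - (0 : ℕ)) ((0 : ℕ) - 1) * 2 ^ (0 : ℕ)) * X ^ (2 * 0 + E)
      = 0 := by
    norm_num [ich]
  rw [h0, add_zero, Finset.mul_sum]
  apply Finset.sum_congr rfl
  intro j _
  have h1 : ich (a - 1 - ((j : ℕ) + 1 : ℕ)) (((j : ℕ) + 1 : ℕ) - 1) = ich (a - 2 - j) j := by
    rw [show a - 1 - (((j : ℕ) + 1 : ℕ) : ℤ) = a - 2 - j by push_cast; ring,
      show ((((j : ℕ) + 1 : ℕ) : ℤ) - 1) = (j : ℤ) by push_cast; ring]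
  rw [h1]
  rw [show (2 : ℤ) ^ (j + 1) = 2 * 2 ^ j by ring, show 2 * (j + 1) + E = (2 * j + E) + 2 by ring]
  rw [pow_add, show ich (a - 2 - ↑j) ↑j * (2 * 2 ^ j) = 2 * (ich (a - 2 - ↑j) ↑j * 2 ^ j) by ring,
    map_mul]
  ring

lemma S_one : S 1 0 2 - S (-1) 2 2 = 1 := by
  unfold S
  rw [Finset.sum_range_succ, Finset.sum_range_succ, Finset.sum_range_succ, Finset.sum_range_succ]
  norm_num [ich]

lemma S_two : S 2 0 3 - S 0 2 3 = 1 + X ^ 2 := by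
  unfold S
  repeat rw [Finset.sum_range_succ]
  rw [Finset.sum_range_zero]
  norm_num [ich]
  ring

lemma key (n : ℕ) (hn : 1 ≤ n) :
    OPoly n = S (n : ℤ) 0 (n + 1) - S ((n : ℤ) - 2) 2 (n + 1) := by
  induction n using Nat.strong_induction_on with
  | _ n ih =>
    match n, hn with
    | 1, _ =>
      rw [OPoly_one]
      have : ((1 : ℕ) : ℤ) = 1 := by norm_num
      rw [this, show ((1:ℤ) - 2) = -1 by norm_num]
      exact S_one.symm
    | 2, _ =>
      rw [OPoly_two]
      rw [show ((2 : ℕ) : ℤ) = 2 by norm_num, show ((2:ℤ) - 2) = 0 by norm_num]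
      exact S_two.symm
    | (m + 3), _ =>
      have h1 := ih (m + 2) (by omega) (by omega)
      have h2 := ih (m + 1) (by omega) (by omega)
      rw [OPoly_rec m, h1, h2]
      simp only [show m + 2 + 1 = m + 3 from rfl, show m + 1 + 1 = m + 2 from rfl]
      rw [S_rec ((m + 3 : ℕ) : ℤ) (by push_cast; omega) 0 (m + 3),
          S_rec (((m + 3 : ℕ) : ℤ) - 2) (by push_cast; omega) 2 (m + 3)]
      rw [S_mono (((m + 3 : ℕ) : ℤ) - 1) 0 (show m + 3 ≤ m + 3 + 1 by omega) (by push_cast; omega),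
          S_mono (((m + 3 : ℕ) : ℤ) - 2 - 1) 2 (show m + 3 ≤ m + 3 + 1 by omega)
            (by push_cast; omega),
          S_mono (((m + 3 : ℕ) : ℤ) - 2) 0 (show m + 2 ≤ m + 3 by omega) (by push_cast; omega),
          S_mono (((m + 3 : ℕ) : ℤ) - 2 - 2) 2 (show m + 2 ≤ m + 3 by omega) (by push_cast; omega)]
      rw [show ((m + 3 : ℕ) : ℤ) - 2 = ((m + 1 : ℕ) : ℤ) by push_cast; ring]
      rw [show ((m + 3 : ℕ) : ℤ) - 1 = ((m + 2 : ℕ) : ℤ) by push_cast; ring]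
      rw [show ((m + 1 : ℕ) : ℤ) - 1 = ((m + 2 : ℕ) : ℤ) - 2 by push_cast; ring]
      ring
/-- For all `n ≥ 1`,
`𝒪_n(z) = ∑_{j ≥ 0} C(n-j, j) 2^j z^{2j} − ∑_{j ≥ 0} C(n-2-j, j) 2^j z^{2j+2}`. -/
theorem OPoly_closed_form (n : ℕ) (hn : 1 ≤ n) :
    OPoly n =
      (∑ j ∈ Finset.range (n + 1), Polynomial.C (ich ((n : ℤ) - j) j * 2 ^ j) * X ^ (2 * j)) -
        ∑ j ∈ Finset.range (n + 1),
          Polynomial.C (ich ((n : ℤ) - 2 - j) j * 2 ^ j) * X ^ (2 * j + 2) :=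
  key n hn
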